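/- There exists a constant C > 0, depending only on δ, β_S, β_Ω, such that for all h ∈ (0,1/4) and all (r,z) with 0 < r < δ and 0 < z < h + γ_s(r), the derivatives of Ψ with respect to the parameter h satisfy: |∂_hΨ(r,z)| ≤ C/(h+γ_s(r)); |∂_{rh}Ψ(r,z)| ≤ C/(h+γ_s(r)) + C·r/(h+γ_s(r))²; |∂_{zzh}Ψ(r,z)| + |∂_{rrh}Ψ(r,z)| + |∂_{hz}Ψ(r,z)| ≤ C/(h+γ_s(r))²; and |∂_{rzh}Ψ(r,z)| ≤ C/(h+γ_s(r))² + C·r/(h+γ_s(r))³. -/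

import Mathlib

/-!
Write `s = h + γ_s(r)`. Then `Ψ(h, r, z) = G(s, z)` with `G(s, z) = A(s) z + B(s) z² + C(s) z³`,
where `A = P₁/s`, `B = P₂/s²`, `C = P₃/s³` are smooth functions of `s ∈ [0, ∞)` divided by
`s`, `s` and `s²` respectively (`P₂` and `P₃` vanish at `s = 0`). Differentiating a smooth
function over `sᵐ` `k` times gives a smooth function over `s^(m+k)`, so on `(0, 1]` the `k`-th
derivatives of the coefficients are `O(s^(-m-k))`; with `0 < z < s` this gives
`∂ₛᵏ G, ∂ₛᵏ ∂_z G · s, ∂ₛᵏ ∂_z² G · s = O(s^(-k))`. Derivatives in `h` are derivatives in `s`,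
derivatives in `r` bring in `γ_s' = O(r)` and `γ_s'' = O(1)` by the chain rule, and
`r² ≤ 2 γ_s(r) ≤ 2 s` absorbs the factor `γ_s'²`.
-/

open Real MeasureTheory intervalIntegral

noncomputable section

/-- `γ_s(r) = 1 - √(1 - r²)`. -/
def gam (r : ℝ) : ℝ := 1 - Real.sqrt (1 - r ^ 2)

/-- `α_P(r) = (h + γ_s(r)) / β_Ω`. -/
def aP (βΩ h r : ℝ) : ℝ := (h + gam r) / βΩ

/-- `α_S(r) = (1/β_S + 2) (h + γ_s(r))`. -/
def aS (βS h r : ℝ) : ℝ := (1 / βS + 2) * (h + gam r)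

/-- The cubic `Φ(r,t) = P₁(r) t + P₂(r) t² + P₃(r) t³` of the slip case. -/
def Phi (βS βΩ h r t : ℝ) : ℝ :=
  6 * (2 + aS βS h r) / (12 + 4 * (aS βS h r + aP βΩ h r) + aS βS h r * aP βΩ h r) * t +
  3 * (2 + aS βS h r) * aP βΩ h r / (12 + 4 * (aS βS h r + aP βΩ h r) + aS βS h r * aP βΩ h r) * t ^ 2 +
  -(2 * (aS βS h r + aS βS h r * aP βΩ h r + aP βΩ h r)) / (12 + 4 * (aS βS h r + aP βΩ h r) + aS βS h r * aP βΩ h r) * t ^ 3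

/-- `Ψ(r,z) = Φ(r, z / (h + γ_s(r)))`. -/
def Psi (βS βΩ h r z : ℝ) : ℝ := Phi βS βΩ h r (z / (h + gam r))

/-- Partial derivative in the first (`r`) variable. -/
def dR (f : ℝ → ℝ → ℝ) : ℝ → ℝ → ℝ := fun r z => deriv (fun r' => f r' z) r

/-- Partial derivative in the second (`z`) variable. -/
def dZ (f : ℝ → ℝ → ℝ) : ℝ → ℝ → ℝ := fun r z => deriv (fun z' => f r z') z

/-- Partial derivative in the first (`h`) variable of a function of `(h,r,z)`. -/
def dH3 (f : ℝ → ℝ → ℝ → ℝ) : ℝ → ℝ → ℝ → ℝ := fun h r z => deriv (fun h' => f h' r z) h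

/-- Partial derivative in the second (`r`) variable of a function of `(h,r,z)`. -/
def dR3 (f : ℝ → ℝ → ℝ → ℝ) : ℝ → ℝ → ℝ → ℝ := fun h r z => deriv (fun r' => f h r' z) r

/-- Partial derivative in the third (`z`) variable of a function of `(h,r,z)`. -/
def dZ3 (f : ℝ → ℝ → ℝ → ℝ) : ℝ → ℝ → ℝ → ℝ := fun h r z => deriv (fun z' => f h r z') z

open Set Filter Topology
open scoped ContDiff

def SmoothOverPow (m : ℕ) (f : ℝ → ℝ) : Prop :=
  ∃ U : Set ℝ, ∃ g : ℝ → ℝ, IsOpen U ∧ Ici 0 ⊆ U ∧ ContDiffOn ℝ ∞ g U ∧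
    ∀ s, 0 < s → f s = g s / s ^ m

lemma hasDerivAt_div_pow {g : ℝ → ℝ} {g' s : ℝ} (m : ℕ) (hg : HasDerivAt g g' s) (hs : s ≠ 0) :
    HasDerivAt (fun x => g x / x ^ m) ((s * g' - m * g s) / s ^ (m + 1)) s := by
  refine (hg.fun_div (hasDerivAt_pow m s) (pow_ne_zero m hs)).congr_deriv ?_
  rcases m with _ | m
  · simp [field]
  · field_simp
    push_cast
    ring

lemma smoothOverPow_of_eq_div {f p q : ℝ → ℝ} {m : ℕ} (hp : ContDiff ℝ ∞ p)
    (hq : ContDiff ℝ ∞ q) (hq0 : ∀ s, 0 ≤ s → q s ≠ 0)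
    (hf : ∀ s, 0 < s → f s = p s / (s ^ m * q s)) : SmoothOverPow m f :=
  ⟨{s | q s ≠ 0}, fun s => p s / q s, isOpen_ne_fun hq.continuous continuous_const, hq0,
    hp.contDiffOn.div hq.contDiffOn fun _ hs => hs, fun s hs => by
      rw [hf s hs, div_div, mul_comm]⟩

namespace SmoothOverPow

variable {m : ℕ} {f : ℝ → ℝ}

protected lemma deriv (hf : SmoothOverPow m f) : SmoothOverPow (m + 1) (deriv f) := by
  obtain ⟨U, g, hU, hU0, hg, hfg⟩ := hf
  refine ⟨U, fun x => x * deriv g x - m * g x, hU, hU0, ?_, fun s hs => ?_⟩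
  · have hg' := hg.deriv_of_isOpen hU (m := ∞) le_rfl
    fun_prop
  · have hgs : HasDerivAt g (deriv g s) s :=
      ((hg.differentiableOn (by simp)).differentiableAt (hU.mem_nhds (hU0 hs.le))).hasDerivAt
    rw [(eventuallyEq_of_mem (Ioi_mem_nhds hs) hfg).deriv_eq]
    exact (hasDerivAt_div_pow m hgs hs.ne').deriv

protected lemma iteratedDeriv (hf : SmoothOverPow m f) (k : ℕ) :
    SmoothOverPow (m + k) (iteratedDeriv k f) := by
  induction k with
  | zero => simpa using hf
  | succ k ih => simpa [iteratedDeriv_succ, ← add_assoc] using ih.deriv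

protected lemma differentiableAt (hf : SmoothOverPow m f) {s : ℝ} (hs : 0 < s) :
    DifferentiableAt ℝ f s := by
  obtain ⟨U, g, hU, hU0, hg, hfg⟩ := hf
  have hgs : DifferentiableAt ℝ g s :=
    (hg.differentiableOn (by simp)).differentiableAt (hU.mem_nhds (hU0 hs.le))
  exact (hgs.div (differentiableAt_pow m) (pow_ne_zero m hs.ne')).congr_of_eventuallyEq
    (eventuallyEq_of_mem (Ioi_mem_nhds hs) hfg)

lemma hasDerivAt_iteratedDeriv (hf : SmoothOverPow m f) (k : ℕ) {s : ℝ} (hs : 0 < s) :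
    HasDerivAt (iteratedDeriv k f) (iteratedDeriv (k + 1) f s) s := by
  rw [iteratedDeriv_succ]
  exact ((hf.iteratedDeriv k).differentiableAt hs).hasDerivAt

lemma exists_abs_le (hf : SmoothOverPow m f) : ∃ M, ∀ s ∈ Ioc (0 : ℝ) 1, |f s| ≤ M / s ^ m := by
  obtain ⟨U, g, hU, hU0, hg, hfg⟩ := hf
  obtain ⟨M, hM⟩ := isCompact_Icc.exists_bound_of_continuousOn
    (hg.continuousOn.mono (Icc_subset_Ici_self.trans hU0))
  refine ⟨M, fun s hs => ?_⟩
  rw [hfg s hs.1, abs_div, abs_of_pos (pow_pos hs.1 m)]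
  exact div_le_div_of_nonneg_right (hM s (Ioc_subset_Icc_self hs)) (pow_pos hs.1 m).le

lemma exists_abs_iteratedDeriv_le (hf : SmoothOverPow m f) (n : ℕ) :
    ∃ M, ∀ k ≤ n, ∀ s ∈ Ioc (0 : ℝ) 1, |iteratedDeriv k f s| ≤ M / s ^ (m + k) := by
  induction n with
  | zero =>
    obtain ⟨M, hM⟩ := (hf.iteratedDeriv 0).exists_abs_le
    exact ⟨M, fun k hk => by rwa [Nat.le_zero.mp hk]⟩
  | succ n ih =>
    obtain ⟨M, hM⟩ := ih
    obtain ⟨M', hM'⟩ := (hf.iteratedDeriv (n + 1)).exists_abs_le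
    refine ⟨max M M', fun k hk s hs => ?_⟩
    have hpow := (pow_pos hs.1 (m + k)).le
    rcases Nat.lt_or_eq_of_le hk with hk | rfl
    · exact (hM k (by omega) s hs).trans (div_le_div_of_nonneg_right (le_max_left _ _) hpow)
    · exact (hM' s hs).trans (div_le_div_of_nonneg_right (le_max_right _ _) hpow)

end SmoothOverPow

def gamDeriv (r : ℝ) : ℝ := r / √(1 - r ^ 2)

def gamDeriv2 (r : ℝ) : ℝ := 1 / ((1 - r ^ 2) * √(1 - r ^ 2))

lemma gam_nonneg (r : ℝ) : 0 ≤ gam r := by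
  have : √(1 - r ^ 2) ≤ 1 := Real.sqrt_le_one.mpr (by nlinarith)
  unfold gam; linarith

lemma add_gam_pos {h : ℝ} (hh : 0 < h) (r : ℝ) : 0 < h + gam r :=
  add_pos_of_pos_of_nonneg hh (gam_nonneg r)

lemma gam_le_sq (r : ℝ) : gam r ≤ r ^ 2 := by
  have : 1 - r ^ 2 ≤ √(1 - r ^ 2) := by
    rcases le_total 0 (1 - r ^ 2) with h | h
    · calc 1 - r ^ 2 = √((1 - r ^ 2) ^ 2) := (Real.sqrt_sq h).symm
        _ ≤ √(1 - r ^ 2) := Real.sqrt_le_sqrt (by nlinarith)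
    · exact h.trans (Real.sqrt_nonneg _)
  unfold gam; linarith

lemma sq_le_two_mul_gam {r : ℝ} (hr : r ^ 2 ≤ 1) : r ^ 2 ≤ 2 * gam r := by
  have : √(1 - r ^ 2) ≤ 1 - r ^ 2 / 2 :=
    Real.sqrt_le_iff.mpr ⟨by linarith, by nlinarith⟩
  unfold gam; linarith

lemma hasDerivAt_sqrt_one_sub_sq {r : ℝ} (hr : r ^ 2 < 1) :
    HasDerivAt (fun x => √(1 - x ^ 2)) (-gamDeriv r) r := by
  have h0 : 1 - r ^ 2 ≠ 0 := by linarith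
  refine (((hasDerivAt_pow 2 r).const_sub 1).sqrt h0).congr_deriv ?_
  rw [gamDeriv]; field_simp; ring

lemma hasDerivAt_gam {r : ℝ} (hr : r ^ 2 < 1) : HasDerivAt gam (gamDeriv r) r := by
  have := (hasDerivAt_sqrt_one_sub_sq hr).const_sub 1
  rwa [neg_neg] at this

lemma hasDerivAt_gamDeriv {r : ℝ} (hr : r ^ 2 < 1) : HasDerivAt gamDeriv (gamDeriv2 r) r := by
  have h0 : 0 < 1 - r ^ 2 := by linarith
  have hsq : 0 < √(1 - r ^ 2) := Real.sqrt_pos.mpr h0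
  refine ((hasDerivAt_id' r).fun_div (hasDerivAt_sqrt_one_sub_sq hr) hsq.ne').congr_deriv ?_
  rw [gamDeriv, gamDeriv2, Real.sq_sqrt h0.le]
  field_simp
  rw [Real.sq_sqrt h0.le]
  ring

lemma half_le_sqrt_one_sub_sq {r : ℝ} (hr0 : 0 ≤ r) (hr : r < 1 / 2) : 1 / 2 ≤ √(1 - r ^ 2) :=
  Real.le_sqrt_of_sq_le (by nlinarith)

lemma abs_gamDeriv_le {r : ℝ} (hr0 : 0 ≤ r) (hr : r < 1 / 2) : |gamDeriv r| ≤ 2 * r := by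
  have := half_le_sqrt_one_sub_sq hr0 hr
  rw [gamDeriv, abs_of_nonneg (by positivity), div_le_iff₀ (by linarith)]
  nlinarith

lemma abs_gamDeriv2_le {r : ℝ} (hr0 : 0 ≤ r) (hr : r < 1 / 2) : |gamDeriv2 r| ≤ 3 := by
  have := half_le_sqrt_one_sub_sq hr0 hr
  have h34 : 3 / 4 ≤ 1 - r ^ 2 := by nlinarith
  rw [gamDeriv2, abs_of_nonneg (by positivity), div_le_iff₀ (by positivity)]
  nlinarith

/-- With `s = h + γ_s(r)` one has `α_S = (1/β_S + 2) s`, `α_P = s / β_Ω`, `Δ = slipDen s`, and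
`slipA`, `slipB`, `slipC` are `P₁ / s`, `P₂ / s²`, `P₃ / s³`, so that
`Ψ = slipA s * z + slipB s * z ^ 2 + slipC s * z ^ 3` (`Psi_eq`). -/
def slipDen (βS βΩ s : ℝ) : ℝ :=
  12 + 4 * ((1 / βS + 2) * s + s / βΩ) + (1 / βS + 2) * s * (s / βΩ)

def slipA (βS βΩ s : ℝ) : ℝ := 6 * (2 + (1 / βS + 2) * s) / (s * slipDen βS βΩ s)

def slipB (βS βΩ s : ℝ) : ℝ := 3 * (2 + (1 / βS + 2) * s) / (βΩ * s * slipDen βS βΩ s)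

def slipC (βS βΩ s : ℝ) : ℝ :=
  -2 * ((1 / βS + 2) * (1 + s / βΩ) + 1 / βΩ) / (s ^ 2 * slipDen βS βΩ s)

section SlipCoefficients

variable {βS βΩ : ℝ} (hβS : 0 < βS) (hβΩ : 0 < βΩ)
include hβS hβΩ

lemma slipDen_pos {s : ℝ} (hs : 0 ≤ s) : 0 < slipDen βS βΩ s := by
  unfold slipDen; positivity

lemma smoothOverPow_slipA : SmoothOverPow 1 (slipA βS βΩ) :=
  smoothOverPow_of_eq_div (p := fun s => 6 * (2 + (1 / βS + 2) * s)) (by fun_prop)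
    (by unfold slipDen; fun_prop) (fun s hs => (slipDen_pos hβS hβΩ hs).ne')
    fun s _ => by rw [slipA, pow_one]

lemma smoothOverPow_slipB : SmoothOverPow 1 (slipB βS βΩ) :=
  smoothOverPow_of_eq_div (p := fun s => 3 * (2 + (1 / βS + 2) * s))
    (q := fun s => βΩ * slipDen βS βΩ s) (by fun_prop) (by unfold slipDen; fun_prop)
    (fun s hs => (mul_pos hβΩ (slipDen_pos hβS hβΩ hs)).ne') fun s _ => by
      rw [slipB]; ring

lemma smoothOverPow_slipC : SmoothOverPow 2 (slipC βS βΩ) :=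
  smoothOverPow_of_eq_div (p := fun s => -2 * ((1 / βS + 2) * (1 + s / βΩ) + 1 / βΩ))
    (by fun_prop) (by unfold slipDen; fun_prop) (fun s hs => (slipDen_pos hβS hβΩ hs).ne')
    fun s _ => rfl

lemma Psi_eq {h r z : ℝ} (hs : 0 < h + gam r) :
    Psi βS βΩ h r z = slipA βS βΩ (h + gam r) * z + slipB βS βΩ (h + gam r) * z ^ 2 +
      slipC βS βΩ (h + gam r) * z ^ 3 := by
  have hD := (slipDen_pos hβS hβΩ hs.le).ne'
  unfold slipDen at hD
  simp only [Psi, Phi, aS, aP, slipA, slipB, slipC, slipDen]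
  field_simp

end SlipCoefficients

/-- `slipProfile k`, `slipProfileZ k`, `slipProfileZZ k` are `∂ₛᵏ G`, `∂ₛᵏ ∂_z G`, `∂ₛᵏ ∂_z² G`
for the profile `G(s, z) = slipA s * z + slipB s * z ^ 2 + slipC s * z ^ 3`. -/
def slipProfile (βS βΩ : ℝ) (k : ℕ) (s z : ℝ) : ℝ :=
  iteratedDeriv k (slipA βS βΩ) s * z + iteratedDeriv k (slipB βS βΩ) s * z ^ 2 +
    iteratedDeriv k (slipC βS βΩ) s * z ^ 3

def slipProfileZ (βS βΩ : ℝ) (k : ℕ) (s z : ℝ) : ℝ :=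
  iteratedDeriv k (slipA βS βΩ) s + 2 * iteratedDeriv k (slipB βS βΩ) s * z +
    3 * iteratedDeriv k (slipC βS βΩ) s * z ^ 2

def slipProfileZZ (βS βΩ : ℝ) (k : ℕ) (s z : ℝ) : ℝ :=
  2 * iteratedDeriv k (slipB βS βΩ) s + 6 * iteratedDeriv k (slipC βS βΩ) s * z

lemma hasDerivAt_slipProfile_z (βS βΩ : ℝ) (k : ℕ) (s z : ℝ) :
    HasDerivAt (slipProfile βS βΩ k s) (slipProfileZ βS βΩ k s z) z := by
  refine ((((hasDerivAt_id' z).const_mul _).add ((hasDerivAt_pow 2 z).const_mul _)).add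
    ((hasDerivAt_pow 3 z).const_mul _)).congr_deriv ?_
  simp only [slipProfileZ]; ring

lemma hasDerivAt_slipProfileZ_z (βS βΩ : ℝ) (k : ℕ) (s z : ℝ) :
    HasDerivAt (slipProfileZ βS βΩ k s) (slipProfileZZ βS βΩ k s z) z := by
  refine (((hasDerivAt_const z _).add ((hasDerivAt_id' z).const_mul _)).add
    ((hasDerivAt_pow 2 z).const_mul _)).congr_deriv ?_
  simp only [slipProfileZZ]; ring

section SlipProfileDerivS

variable {βS βΩ : ℝ} (hβS : 0 < βS) (hβΩ : 0 < βΩ) (k : ℕ) {s : ℝ} (z : ℝ) (hs : 0 < s)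
include hβS hβΩ hs

lemma hasDerivAt_slipProfile_s :
    HasDerivAt (slipProfile βS βΩ k · z) (slipProfile βS βΩ (k + 1) s z) s := by
  have hA := (smoothOverPow_slipA hβS hβΩ).hasDerivAt_iteratedDeriv k hs
  have hB := (smoothOverPow_slipB hβS hβΩ).hasDerivAt_iteratedDeriv k hs
  have hC := (smoothOverPow_slipC hβS hβΩ).hasDerivAt_iteratedDeriv k hs
  exact ((hA.mul_const _).add (hB.mul_const _)).add (hC.mul_const _)

lemma hasDerivAt_slipProfileZ_s :
    HasDerivAt (slipProfileZ βS βΩ k · z) (slipProfileZ βS βΩ (k + 1) s z) s := by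
  have hA := (smoothOverPow_slipA hβS hβΩ).hasDerivAt_iteratedDeriv k hs
  have hB := (smoothOverPow_slipB hβS hβΩ).hasDerivAt_iteratedDeriv k hs
  have hC := (smoothOverPow_slipC hβS hβΩ).hasDerivAt_iteratedDeriv k hs
  exact (hA.add ((hB.const_mul 2).mul_const z)).add ((hC.const_mul 3).mul_const _)

lemma hasDerivAt_slipProfileZZ_s :
    HasDerivAt (slipProfileZZ βS βΩ k · z) (slipProfileZZ βS βΩ (k + 1) s z) s := by
  have hB := (smoothOverPow_slipB hβS hβΩ).hasDerivAt_iteratedDeriv k hs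
  have hC := (smoothOverPow_slipC hβS hβΩ).hasDerivAt_iteratedDeriv k hs
  exact (hB.const_mul 2).add ((hC.const_mul 6).mul_const z)

end SlipProfileDerivS

lemma dH3_eq_deriv {F : ℝ → ℝ → ℝ → ℝ} {φ : ℝ → ℝ} {h r z : ℝ} (hh : 0 < h)
    (hF : ∀ h', 0 < h' → F h' r z = φ (h' + gam r)) : dH3 F h r z = deriv φ (h + gam r) := by
  have hF' : (fun h' => F h' r z) =ᶠ[𝓝 h] fun h' => φ (h' + gam r) :=
    eventuallyEq_of_mem (Ioi_mem_nhds hh) hF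
  rw [dH3, hF'.deriv_eq, deriv_comp_add_const]

section PsiDerivatives

variable {βS βΩ : ℝ} (hβS : 0 < βS) (hβΩ : 0 < βΩ) {h r : ℝ} (z : ℝ) (hh : 0 < h)
include hβS hβΩ hh

lemma Psi_eq_slipProfile (r : ℝ) : Psi βS βΩ h r z = slipProfile βS βΩ 0 (h + gam r) z := by
  simpa [slipProfile] using Psi_eq hβS hβΩ (add_gam_pos hh r)

lemma dH3_Psi : dH3 (Psi βS βΩ) h r z = slipProfile βS βΩ 1 (h + gam r) z := by
  rw [dH3_eq_deriv (φ := (slipProfile βS βΩ 0 · z)) hh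
    fun h' hh' => Psi_eq_slipProfile hβS hβΩ z hh' r]
  exact (hasDerivAt_slipProfile_s hβS hβΩ 0 z (add_gam_pos hh r)).deriv

lemma dZ3_Psi : dZ3 (Psi βS βΩ) h r z = slipProfileZ βS βΩ 0 (h + gam r) z := by
  rw [dZ3, funext fun z => Psi_eq_slipProfile hβS hβΩ z hh r]
  exact (hasDerivAt_slipProfile_z βS βΩ 0 _ z).deriv

lemma dZ3_dZ3_Psi : dZ3 (dZ3 (Psi βS βΩ)) h r z = slipProfileZZ βS βΩ 0 (h + gam r) z := by
  rw [dZ3, funext fun z => dZ3_Psi hβS hβΩ z hh]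
  exact (hasDerivAt_slipProfileZ_z βS βΩ 0 _ z).deriv

lemma dH3_dZ3_dZ3_Psi :
    dH3 (dZ3 (dZ3 (Psi βS βΩ))) h r z = slipProfileZZ βS βΩ 1 (h + gam r) z := by
  rw [dH3_eq_deriv (φ := (slipProfileZZ βS βΩ 0 · z)) hh
    fun h' hh' => dZ3_dZ3_Psi hβS hβΩ z hh']
  exact (hasDerivAt_slipProfileZZ_s hβS hβΩ 0 z (add_gam_pos hh r)).deriv

lemma dZ3_dH3_Psi : dZ3 (dH3 (Psi βS βΩ)) h r z = slipProfileZ βS βΩ 1 (h + gam r) z := by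
  rw [dZ3, funext fun z => dH3_Psi hβS hβΩ z hh]
  exact (hasDerivAt_slipProfile_z βS βΩ 1 _ z).deriv

lemma hasDerivAt_slipProfile_comp_gam (k : ℕ) (hr : r ^ 2 < 1) :
    HasDerivAt (fun r => slipProfile βS βΩ k (h + gam r) z)
      (slipProfile βS βΩ (k + 1) (h + gam r) z * gamDeriv r) r := by
  have := (hasDerivAt_slipProfile_s hβS hβΩ k z (add_gam_pos hh r)).comp r
    ((hasDerivAt_gam hr).const_add h)
  exact this

lemma dR3_Psi (hr : r ^ 2 < 1) :
    dR3 (Psi βS βΩ) h r z = slipProfile βS βΩ 1 (h + gam r) z * gamDeriv r := by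
  rw [dR3, funext (Psi_eq_slipProfile hβS hβΩ z hh)]
  exact (hasDerivAt_slipProfile_comp_gam hβS hβΩ z hh 0 hr).deriv

lemma dH3_dR3_Psi (hr : r ^ 2 < 1) :
    dH3 (dR3 (Psi βS βΩ)) h r z = slipProfile βS βΩ 2 (h + gam r) z * gamDeriv r := by
  rw [dH3_eq_deriv (φ := fun s => slipProfile βS βΩ 1 s z * gamDeriv r) hh
    fun h' hh' => dR3_Psi hβS hβΩ z hh' hr, deriv_mul_const_field,
    (hasDerivAt_slipProfile_s hβS hβΩ 1 z (add_gam_pos hh r)).deriv]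

lemma dZ3_dR3_Psi (hr : r ^ 2 < 1) :
    dZ3 (dR3 (Psi βS βΩ)) h r z = slipProfileZ βS βΩ 1 (h + gam r) z * gamDeriv r := by
  rw [dZ3, funext fun z => dR3_Psi hβS hβΩ z hh hr]
  exact ((hasDerivAt_slipProfile_z βS βΩ 1 _ z).mul_const _).deriv

lemma dH3_dZ3_dR3_Psi (hr : r ^ 2 < 1) :
    dH3 (dZ3 (dR3 (Psi βS βΩ))) h r z = slipProfileZ βS βΩ 2 (h + gam r) z * gamDeriv r := by
  rw [dH3_eq_deriv (φ := fun s => slipProfileZ βS βΩ 1 s z * gamDeriv r) hh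
    fun h' hh' => dZ3_dR3_Psi hβS hβΩ z hh' hr, deriv_mul_const_field,
    (hasDerivAt_slipProfileZ_s hβS hβΩ 1 z (add_gam_pos hh r)).deriv]

lemma dR3_dR3_Psi (hr : r ^ 2 < 1) :
    dR3 (dR3 (Psi βS βΩ)) h r z = slipProfile βS βΩ 2 (h + gam r) z * gamDeriv r ^ 2 +
      slipProfile βS βΩ 1 (h + gam r) z * gamDeriv2 r := by
  have hnhds : (fun r' => dR3 (Psi βS βΩ) h r' z) =ᶠ[𝓝 r]
      fun r' => slipProfile βS βΩ 1 (h + gam r') z * gamDeriv r' :=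
    eventuallyEq_of_mem ((isOpen_lt (continuous_pow 2) continuous_const).mem_nhds
      (show r ∈ {x : ℝ | x ^ 2 < 1} from hr)) fun r' hr' => dR3_Psi hβS hβΩ z hh hr'
  rw [dR3, hnhds.deriv_eq]
  refine (((hasDerivAt_slipProfile_comp_gam hβS hβΩ z hh 1 hr).mul
    (hasDerivAt_gamDeriv hr)).congr_deriv ?_).deriv
  ring

lemma dH3_dR3_dR3_Psi (hr : r ^ 2 < 1) :
    dH3 (dR3 (dR3 (Psi βS βΩ))) h r z = slipProfile βS βΩ 3 (h + gam r) z * gamDeriv r ^ 2 +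
      slipProfile βS βΩ 2 (h + gam r) z * gamDeriv2 r := by
  rw [dH3_eq_deriv (φ := fun s => slipProfile βS βΩ 2 s z * gamDeriv r ^ 2 +
    slipProfile βS βΩ 1 s z * gamDeriv2 r) hh fun h' hh' => dR3_dR3_Psi hβS hβΩ z hh' hr]
  exact (((hasDerivAt_slipProfile_s hβS hβΩ 2 z (add_gam_pos hh r)).mul_const _).add
    ((hasDerivAt_slipProfile_s hβS hβΩ 1 z (add_gam_pos hh r)).mul_const _)).deriv

end PsiDerivatives

lemma abs_mul_pow_le {x z s M : ℝ} {n j : ℕ} (hs : 0 < s) (hz0 : 0 ≤ z) (hzs : z ≤ s)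
    (hx : |x| ≤ M / s ^ (n + j)) : |x * z ^ j| ≤ M / s ^ n := by
  rw [abs_mul, abs_of_nonneg (pow_nonneg hz0 j)]
  calc |x| * z ^ j ≤ M / s ^ (n + j) * s ^ j :=
        mul_le_mul hx (pow_le_pow_left₀ hz0 hzs j) (pow_nonneg hz0 j) ((abs_nonneg x).trans hx)
    _ = M / s ^ n := by field_simp; ring

lemma div_pow_le_div_pow {M s : ℝ} {m n : ℕ} (hM : 0 ≤ M) (hs0 : 0 < s) (hs1 : s ≤ 1)
    (hmn : m ≤ n) : M / s ^ m ≤ M / s ^ n :=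
  div_le_div_of_nonneg_left hM (pow_pos hs0 n) (pow_le_pow_of_le_one hs0.le hs1 hmn)

section CubicBounds

variable {a b c s z M : ℝ} {k : ℕ}

lemma abs_cubic_le (hM : 0 ≤ M) (hs1 : s ≤ 1) (hz0 : 0 < z) (hzs : z ≤ s)
    (ha : |a| ≤ M / s ^ (k + 1)) (hb : |b| ≤ M / s ^ (k + 1)) (hc : |c| ≤ M / s ^ (k + 2)) :
    |a * z + b * z ^ 2 + c * z ^ 3| ≤ 3 * M / s ^ k := by
  have hs := hz0.trans_le hzs
  have h1 : |a * z ^ 1| ≤ M / s ^ k := abs_mul_pow_le hs hz0.le hzs ha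
  have h2 : |b * z ^ 2| ≤ M / s ^ k :=
    abs_mul_pow_le hs hz0.le hzs (hb.trans (div_pow_le_div_pow hM hs hs1 (by omega)))
  have h3 : |c * z ^ 3| ≤ M / s ^ k :=
    abs_mul_pow_le hs hz0.le hzs (hc.trans (div_pow_le_div_pow hM hs hs1 (by omega)))
  rw [pow_one] at h1
  calc _ ≤ |a * z| + |b * z ^ 2| + |c * z ^ 3| := abs_add_three _ _ _
    _ ≤ 3 * M / s ^ k := by rw [mul_div_assoc]; linarith

lemma abs_cubicZ_le (hM : 0 ≤ M) (hs1 : s ≤ 1) (hz0 : 0 < z) (hzs : z ≤ s)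
    (ha : |a| ≤ M / s ^ (k + 1)) (hb : |b| ≤ M / s ^ (k + 1)) (hc : |c| ≤ M / s ^ (k + 2)) :
    |a + 2 * b * z + 3 * c * z ^ 2| ≤ 6 * M / s ^ (k + 1) := by
  have hs := hz0.trans_le hzs
  have h2 : |b * z ^ 1| ≤ M / s ^ (k + 1) :=
    abs_mul_pow_le hs hz0.le hzs (hb.trans (div_pow_le_div_pow hM hs hs1 (by omega)))
  have h3 : |c * z ^ 2| ≤ M / s ^ (k + 1) :=
    abs_mul_pow_le hs hz0.le hzs (hc.trans (div_pow_le_div_pow hM hs hs1 (by omega)))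
  have e2 : |2 * b * z| = 2 * |b * z ^ 1| := by rw [pow_one, mul_assoc, abs_mul, abs_two]
  have e3 : |3 * c * z ^ 2| = 3 * |c * z ^ 2| := by
    rw [mul_assoc, abs_mul, abs_of_pos (by norm_num : (0 : ℝ) < 3)]
  calc _ ≤ |a| + |2 * b * z| + |3 * c * z ^ 2| := abs_add_three _ _ _
    _ ≤ 6 * M / s ^ (k + 1) := by rw [e2, e3, mul_div_assoc]; linarith

lemma abs_cubicZZ_le (hz0 : 0 < z) (hzs : z ≤ s) (hb : |b| ≤ M / s ^ (k + 1))
    (hc : |c| ≤ M / s ^ (k + 2)) : |2 * b + 6 * c * z| ≤ 8 * M / s ^ (k + 1) := by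
  have h3 : |c * z ^ 1| ≤ M / s ^ (k + 1) := abs_mul_pow_le (hz0.trans_le hzs) hz0.le hzs hc
  have e2 : |2 * b| = 2 * |b| := by rw [abs_mul, abs_two]
  have e3 : |6 * c * z| = 6 * |c * z ^ 1| := by
    rw [pow_one, mul_assoc, abs_mul, abs_of_pos (by norm_num : (0 : ℝ) < 6)]
  calc _ ≤ |2 * b| + |6 * c * z| := abs_add_le _ _
    _ ≤ 8 * M / s ^ (k + 1) := by rw [e2, e3, mul_div_assoc]; linarith

end CubicBounds

lemma exists_slipProfile_bounds {βS βΩ : ℝ} (hβS : 0 < βS) (hβΩ : 0 < βΩ) :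
    ∃ M, 0 < M ∧ ∀ k ≤ 3, ∀ s z : ℝ, 0 < z → z ≤ s → s ≤ 1 →
      |slipProfile βS βΩ k s z| ≤ M / s ^ k ∧ |slipProfileZ βS βΩ k s z| ≤ M / s ^ (k + 1) ∧
        |slipProfileZZ βS βΩ k s z| ≤ M / s ^ (k + 1) := by
  obtain ⟨MA, hA⟩ := (smoothOverPow_slipA hβS hβΩ).exists_abs_iteratedDeriv_le 3
  obtain ⟨MB, hB⟩ := (smoothOverPow_slipB hβS hβΩ).exists_abs_iteratedDeriv_le 3
  obtain ⟨MC, hC⟩ := (smoothOverPow_slipC hβS hβΩ).exists_abs_iteratedDeriv_le 3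
  set M := max (max (max MA MB) MC) 1
  have hM : 0 < M := lt_max_of_lt_right one_pos
  refine ⟨8 * M, by positivity, fun k hk s z hz0 hzs hs1 => ?_⟩
  have hs : s ∈ Ioc 0 1 := ⟨hz0.trans_le hzs, hs1⟩
  have hs0 : 0 < s := hs.1
  have weaken {x N : ℝ} {p : ℕ} (hx : |x| ≤ N / s ^ p) (hN : N ≤ M) : |x| ≤ M / s ^ p :=
    hx.trans (div_le_div_of_nonneg_right hN (pow_pos hs.1 p).le)
  have ha : |iteratedDeriv k (slipA βS βΩ) s| ≤ M / s ^ (k + 1) :=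
    weaken (add_comm 1 k ▸ hA k hk s hs) (by simp [M])
  have hb : |iteratedDeriv k (slipB βS βΩ) s| ≤ M / s ^ (k + 1) :=
    weaken (add_comm 1 k ▸ hB k hk s hs) (by simp [M])
  have hc : |iteratedDeriv k (slipC βS βΩ) s| ≤ M / s ^ (k + 2) :=
    weaken (add_comm 2 k ▸ hC k hk s hs) (by simp [M])
  have h8 {c : ℝ} {p : ℕ} (hc : c ≤ 8) : c * M / s ^ p ≤ 8 * M / s ^ p := by
    gcongr
  exact ⟨(abs_cubic_le hM.le hs1 hz0 hzs ha hb hc).trans (h8 (by norm_num)),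
    (abs_cubicZ_le hM.le hs1 hz0 hzs ha hb hc).trans (h8 (by norm_num)),
    abs_cubicZZ_le hz0 hzs hb hc⟩

lemma abs_mul_gamDeriv_le {x M s r : ℝ} {p : ℕ} (hx : |x| ≤ M / s ^ p) (hr0 : 0 ≤ r)
    (hr : r < 1 / 2) : |x * gamDeriv r| ≤ 2 * M * r / s ^ p := by
  calc |x * gamDeriv r| ≤ M / s ^ p * (2 * r) := by
        rw [abs_mul]
        exact mul_le_mul hx (abs_gamDeriv_le hr0 hr) (abs_nonneg _) ((abs_nonneg _).trans hx)
    _ = 2 * M * r / s ^ p := by ring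

lemma abs_mul_gamDeriv_sq_add_le {x y M s r : ℝ} (hM : 0 ≤ M) (hs : 0 < s)
    (hx : |x| ≤ M / s ^ 3) (hy : |y| ≤ M / s ^ 2) (hr0 : 0 ≤ r) (hr : r < 1 / 2)
    (hrs : r ^ 2 ≤ 2 * s) : |x * gamDeriv r ^ 2 + y * gamDeriv2 r| ≤ 11 * M / s ^ 2 := by
  have h1 : |x * gamDeriv r ^ 2| ≤ 8 * M / s ^ 2 := by
    rw [abs_mul, abs_pow]
    calc |x| * |gamDeriv r| ^ 2 ≤ M / s ^ 3 * (2 * r) ^ 2 :=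
          mul_le_mul hx (pow_le_pow_left₀ (abs_nonneg _) (abs_gamDeriv_le hr0 hr) 2)
            (by positivity) ((abs_nonneg _).trans hx)
      _ = 4 * M * r ^ 2 / s ^ 3 := by ring
      _ ≤ 4 * M * (2 * s) / s ^ 3 := by gcongr
      _ = 8 * M / s ^ 2 := by field_simp; ring
  have h2 : |y * gamDeriv2 r| ≤ 3 * M / s ^ 2 := by
    rw [abs_mul, mul_comm 3, mul_div_right_comm]
    exact mul_le_mul hy (abs_gamDeriv2_le hr0 hr) (abs_nonneg _) ((abs_nonneg _).trans hy)
  calc _ ≤ |x * gamDeriv r ^ 2| + |y * gamDeriv2 r| := abs_add_le _ _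
    _ ≤ 11 * M / s ^ 2 := by
      rw [show 11 * M / s ^ 2 = 8 * M / s ^ 2 + 3 * M / s ^ 2 by ring]; linarith

/-- Proposition A.1, `h`-derivative estimates (slip case): bounds on `∂_hΨ`, `∂_{rh}Ψ`,
`∂_{zzh}Ψ`, `∂_{rrh}Ψ`, `∂_{hz}Ψ` and `∂_{rzh}Ψ`, where `Ψ` is viewed as a function of
the three variables `(h,r,z)`. -/
theorem Psi_bounds_h_derivatives (δ βS βΩ : ℝ) (hδ : δ ∈ Set.Ioo (0 : ℝ) (1 / 4))
    (hβS : 0 < βS) (hβΩ : 0 < βΩ) :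
    ∃ C : ℝ, 0 < C ∧ ∀ h ∈ Set.Ioo (0 : ℝ) (1 / 4), ∀ r z : ℝ,
      0 < r → r < δ → 0 < z → z < h + gam r →
      |dH3 (Psi βS βΩ) h r z| ≤ C / (h + gam r) ∧
      |dH3 (dR3 (Psi βS βΩ)) h r z| ≤ C / (h + gam r) + C * r / (h + gam r) ^ 2 ∧
      |dH3 (dZ3 (dZ3 (Psi βS βΩ))) h r z| + |dH3 (dR3 (dR3 (Psi βS βΩ))) h r z| +
          |dZ3 (dH3 (Psi βS βΩ)) h r z| ≤ C / (h + gam r) ^ 2 ∧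
      |dH3 (dZ3 (dR3 (Psi βS βΩ))) h r z| ≤
        C / (h + gam r) ^ 2 + C * r / (h + gam r) ^ 3 := by
  obtain ⟨M, hM, hG⟩ := exists_slipProfile_bounds hβS hβΩ
  refine ⟨13 * M, by positivity, fun h ⟨hh0, hh⟩ r z hr0 hrδ hz0 hzs => ?_⟩
  have hr : r < 1 / 2 := by linarith [hδ.2]
  have hr2 : r ^ 2 < 1 := by nlinarith
  have hs0 : 0 < h + gam r := add_gam_pos hh0 r
  have hs1 : h + gam r ≤ 1 := by nlinarith [gam_le_sq r]
  have hrs : r ^ 2 ≤ 2 * (h + gam r) := by linarith [sq_le_two_mul_gam hr2.le]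
  obtain ⟨hG1, hGZ1, hGZZ1⟩ := hG 1 (by norm_num) _ z hz0 hzs.le hs1
  obtain ⟨hG2, hGZ2, -⟩ := hG 2 (by norm_num) _ z hz0 hzs.le hs1
  obtain ⟨hG3, -, -⟩ := hG 3 (by norm_num) _ z hz0 hzs.le hs1
  rw [dH3_Psi hβS hβΩ z hh0, dH3_dR3_Psi hβS hβΩ z hh0 hr2, dH3_dZ3_dZ3_Psi hβS hβΩ z hh0,
    dH3_dR3_dR3_Psi hβS hβΩ z hh0 hr2, dZ3_dH3_Psi hβS hβΩ z hh0,
    dH3_dZ3_dR3_Psi hβS hβΩ z hh0 hr2]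
  refine ⟨?_, ?_, ?_, ?_⟩
  · calc _ ≤ M / (h + gam r) ^ 1 := hG1
      _ ≤ 13 * M / (h + gam r) := by rw [pow_one]; gcongr; linarith
  · refine (abs_mul_gamDeriv_le hG2 hr0.le hr).trans (le_add_of_nonneg_of_le (by positivity) ?_)
    gcongr; norm_num
  · have hRR := abs_mul_gamDeriv_sq_add_le hM.le hs0 hG3 hG2 hr0.le hr hrs
    have hsplit : 13 * M / (h + gam r) ^ 2 =
        M / (h + gam r) ^ (1 + 1) + 11 * M / (h + gam r) ^ 2 + M / (h + gam r) ^ (1 + 1) := by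
      ring
    linarith
  · refine (abs_mul_gamDeriv_le hGZ2 hr0.le hr).trans (le_add_of_nonneg_of_le (by positivity) ?_)
    gcongr; norm_num
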